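/- arXiv:1912.12462 — 10 statements merged into one kernel-verified Lean document; each statement's English description precedes it below -/
import Mathlib

section
/- For every real x and every n >= 1, the Pell-type identity |Q_n(x)|^2 - (x^2 - 1) R_{n-1}(x)^2 = 1 holds, where Q_n is the complex polynomial Q_n(z) = (1/sqrt(a^2+1)) ( -(az+i) T_{n-1}(z) + sqrt(a^2+1)(1-z^2) U_{n-2}(z) ) and R_{n-1}(z) = (1/sqrt(a^2+1)) ( sqrt(a^2+1) z U_{n-2}(z) + a T_{n-1}(z) ). -/
/-!
Since `T_{n-1}(x)` and `U_{n-2}(x)` are real, `|Q_n(x)|²` is the sum of the squares of the real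
and imaginary parts, and expanding with `√(a²+1)² = a²+1` collapses the left-hand side to
`T_{n-1}(x)² + (1 - x²) U_{n-2}(x)²`. This is `1` by the Pell identity for Chebyshev polynomials,
which follows from `S_sq_add_S_sq` through `U_n(X) = S_n(2X)` and `T_n = U_n - X U_{n-1}`.
-/

open Polynomial

namespace Polynomial.Chebyshev

variable (R : Type*) [CommRing R]

theorem U_sq_add_U_sq (n : ℤ) :
    U R n ^ 2 + U R (n + 1) ^ 2 - 2 * X * U R n * U R (n + 1) = 1 := by
  have h := congrArg (·.comp (2 * X)) (S_sq_add_S_sq R n)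
  simp only [sub_comp, add_comp, mul_comp, pow_comp, X_comp, one_comp, S_comp_two_mul_X] at h
  linear_combination h

theorem T_sq_add_one_sub_X_sq_mul_U_sq (n : ℤ) :
    T R n ^ 2 + (1 - X ^ 2) * U R (n - 1) ^ 2 = 1 := by
  have hU := U_sq_add_U_sq R (n - 1)
  rw [sub_add_cancel] at hU
  linear_combination (T R n + U R n - X * U R (n - 1)) * T_eq_U_sub_X_mul_U R n + hU

end Polynomial.Chebyshev

theorem norm_sq_sub_mul_sq_eq_sq_add_one_sub_sq_mul_sq (a x t u : ℝ) :
    ‖(1 / (√(a ^ 2 + 1) : ℂ)) *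
        (-((a : ℂ) * x + Complex.I) * t + (√(a ^ 2 + 1) : ℂ) * (1 - (x : ℂ) ^ 2) * u)‖ ^ 2 -
      (x ^ 2 - 1) * ((1 / √(a ^ 2 + 1)) * (√(a ^ 2 + 1) * x * u + a * t)) ^ 2 =
      t ^ 2 + (1 - x ^ 2) * u ^ 2 := by
  set s := √(a ^ 2 + 1)
  have hs2 : s ^ 2 = a ^ 2 + 1 := Real.sq_sqrt (by positivity)
  have hs : s ≠ 0 := by positivity
  have hQ : (1 / (s : ℂ)) * (-((a : ℂ) * x + Complex.I) * t + s * (1 - (x : ℂ) ^ 2) * u) =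
      ((s * (1 - x ^ 2) * u - a * x * t) / s : ℝ) + ((-t / s : ℝ) : ℂ) * Complex.I := by
    push_cast
    field_simp
    ring
  rw [hQ, Complex.sq_norm, Complex.normSq_add_mul_I]
  field_simp
  linear_combination (-t ^ 2) * hs2

theorem stmt2_general (a : ℝ) (n : ℕ) (x : ℝ) :
    ‖((1 / (Real.sqrt (a ^ 2 + 1) : ℂ)) *
        (-((a : ℂ) * (x : ℂ) + Complex.I) *
            (Polynomial.Chebyshev.T ℂ ((n : ℤ) - 1)).eval (x : ℂ) +
          (Real.sqrt (a ^ 2 + 1) : ℂ) * (1 - (x : ℂ) ^ 2) *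
            (Polynomial.Chebyshev.U ℂ ((n : ℤ) - 2)).eval (x : ℂ)))‖ ^ 2 -
      (x ^ 2 - 1) *
        ((1 / Real.sqrt (a ^ 2 + 1)) *
          (Real.sqrt (a ^ 2 + 1) * x * (Polynomial.Chebyshev.U ℝ ((n : ℤ) - 2)).eval x +
            a * (Polynomial.Chebyshev.T ℝ ((n : ℤ) - 1)).eval x)) ^ 2 = 1 := by
  rw [← Chebyshev.complex_ofReal_eval_T, ← Chebyshev.complex_ofReal_eval_U,
    norm_sq_sub_mul_sq_eq_sq_add_one_sub_sq_mul_sq]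
  have hPell := congrArg (eval x) (Chebyshev.T_sq_add_one_sub_X_sq_mul_U_sq ℝ ((n : ℤ) - 1))
  rw [sub_sub, one_add_one_eq_two] at hPell
  simpa using hPell

/-- The Pell-type identity `|Q_n(x)|^2 - (x^2-1) R_{n-1}(x)^2 = 1` for real `x`. -/
theorem stmt2 (a : ℝ) (n : ℕ) (hn : 1 ≤ n) (x : ℝ) :
    ‖((1 / (Real.sqrt (a ^ 2 + 1) : ℂ)) *
        (-((a : ℂ) * (x : ℂ) + Complex.I) *
            (Polynomial.Chebyshev.T ℂ ((n : ℤ) - 1)).eval (x : ℂ) +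
          (Real.sqrt (a ^ 2 + 1) : ℂ) * (1 - (x : ℂ) ^ 2) *
            (Polynomial.Chebyshev.U ℂ ((n : ℤ) - 2)).eval (x : ℂ)))‖ ^ 2 -
      (x ^ 2 - 1) *
        ((1 / Real.sqrt (a ^ 2 + 1)) *
          (Real.sqrt (a ^ 2 + 1) * x * (Polynomial.Chebyshev.U ℝ ((n : ℤ) - 2)).eval x +
            a * (Polynomial.Chebyshev.T ℝ ((n : ℤ) - 1)).eval x)) ^ 2 = 1 :=
  stmt2_general a n x
end

section
/- For a > 0 and n >= 1, the polynomial R_n(x) = (1/sqrt(a^2+1)) ( sqrt(a^2+1) x U_{n-1}(x) + a T_n(x) ) satisfies sgn(R_n(cos(k*pi/n))) = (-1)^k for every integer k with 0 <= k <= n; consequently R_n has at least n distinct zeros in the open interval (-1,1), one in each interval (cos((k+1)pi/n), cos(k pi/n)). -/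
open Polynomial Real

/-! At `x_k = cos (kπ/n)` we have `T_n(x_k) = (-1)^k`, while `x_k U_{n-1}(x_k)` vanishes for
`0 < k < n` and equals `(-1)^k n` at the endpoints `x_k = ±1`. Hence
`(-1)^k R_n(x_k) = (-1)^k x_k U_{n-1}(x_k) + a / √(a²+1) > 0`, so `R_n` alternates in sign at the
`n + 1` extreme points of `T_n`, and the intermediate value theorem gives a zero strictly between
any two consecutive ones. -/

namespace Polynomial.Chebyshev

variable {n k : ℕ}

theorem T_eval_cos_mul_pi_div (hn : n ≠ 0) (k : ℕ) :
    (T ℝ n).eval (cos (k * π / n)) = (-1) ^ k := by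
  rw [T_real_cos, Int.cast_natCast, mul_div_cancel₀ _ (Nat.cast_ne_zero.mpr hn), cos_nat_mul_pi]

theorem U_eval_cos_mul_pi_div_eq_zero (hk0 : 0 < k) (hkn : k < n) :
    (U ℝ ((n : ℤ) - 1)).eval (cos (k * π / n)) = 0 := by
  have hn : (0 : ℝ) < n := by exact_mod_cast hk0.trans hkn
  have hsin : 0 < sin (k * π / n) := by
    apply sin_pos_of_pos_of_lt_pi (by positivity)
    rw [div_lt_iff₀ hn, mul_comm π]
    exact mul_lt_mul_of_pos_right (by exact_mod_cast hkn) pi_pos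
  have h := U_real_cos (k * π / n) ((n : ℤ) - 1)
  rw [Int.cast_sub, Int.cast_natCast, Int.cast_one, sub_add_cancel, mul_div_cancel₀ _ hn.ne',
    sin_nat_mul_pi] at h
  exact (mul_eq_zero.mp h).resolve_right hsin.ne'

theorem neg_one_pow_mul_X_mul_U_eval_cos_mul_pi_div_nonneg (hk : k ≤ n) :
    0 ≤ (-1 : ℝ) ^ k * (cos (k * π / n) * (U ℝ ((n : ℤ) - 1)).eval (cos (k * π / n))) := by
  rcases Nat.eq_zero_or_pos k with rfl | hk0
  · simp [U_eval_one]
  rcases hk.eq_or_lt with rfl | hkn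
  · have hU : (U ℝ ((k : ℤ) - 1)).eval (-1) = - (-1) ^ k * k := by
      simp [U_eval_neg_one, Int.negOnePow_sub]
    rw [mul_div_cancel_left₀ π (by positivity), cos_pi, hU, show (-1 : ℝ) ^ k * (-1 * (-(-1) ^ k * k)) = ((-1) ^ k) ^ 2 * k by ring]
    positivity
  · rw [U_eval_cos_mul_pi_div_eq_zero hk0 hkn, mul_zero, mul_zero]

end Polynomial.Chebyshev

theorem Real.sign_eq_neg_one_pow_of_pos {k : ℕ} {y : ℝ} (hy : 0 < (-1) ^ k * y) :
    Real.sign y = (-1) ^ k := by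
  rcases neg_one_pow_eq_or ℝ k with h | h <;> rw [h] at hy ⊢
  · exact Real.sign_of_pos (by simpa using hy)
  · exact Real.sign_of_neg (by simpa using hy)

theorem mul_neg_of_neg_one_pow_succ_mul_pos_of_neg_one_pow_mul_pos {k : ℕ} {x y : ℝ}
    (hx : 0 < (-1) ^ (k + 1) * x) (hy : 0 < (-1) ^ k * y) : x * y < 0 := by
  have h := mul_pos hx hy
  rw [show (-1 : ℝ) ^ (k + 1) * x * ((-1) ^ k * y) = -(((-1) ^ k) ^ 2 * (x * y)) by ring] at h
  simpa [← pow_mul] using h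

theorem exists_mem_Ioo_eq_zero_of_mul_neg {α δ : Type*} [ConditionallyCompleteLinearOrder α]
    [DenselyOrdered α] [TopologicalSpace α] [OrderTopology α] [Ring δ] [LinearOrder δ]
    [IsStrictOrderedRing δ] [TopologicalSpace δ] [OrderClosedTopology δ] {f : α → δ} {p q : α}
    (hpq : p ≤ q) (hf : ContinuousOn f (Set.Icc p q)) (h : f p * f q < 0) :
    ∃ x ∈ Set.Ioo p q, f x = 0 := by
  rcases mul_neg_iff.mp h with ⟨hp, hq⟩ | ⟨hp, hq⟩
  · exact intermediate_value_Ioo' hpq hf ⟨hq, hp⟩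
  · exact intermediate_value_Ioo hpq hf ⟨hp, hq⟩

theorem cos_succ_mul_pi_div_lt {k n : ℕ} (hk : k < n) :
    cos ((k + 1) * π / n) < cos (k * π / n) := by
  have hn : (0 : ℝ) < n := by exact_mod_cast (Nat.zero_le k).trans_lt hk
  apply cos_lt_cos_of_nonneg_of_le_pi (by positivity)
  · rw [div_le_iff₀ hn, mul_comm π]
    exact mul_le_mul_of_nonneg_right (by exact_mod_cast hk) pi_pos.le
  · gcongr; linarith

noncomputable def chebyshevR (a : ℝ) (n : ℕ) (x : ℝ) : ℝ :=
  (1 / √(a ^ 2 + 1)) *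
    (√(a ^ 2 + 1) * x * (Chebyshev.U ℝ ((n : ℤ) - 1)).eval x + a * (Chebyshev.T ℝ n).eval x)

theorem continuous_chebyshevR (a : ℝ) (n : ℕ) : Continuous (chebyshevR a n) := by
  unfold chebyshevR; fun_prop

theorem neg_one_pow_mul_chebyshevR_cos_mul_pi_div_pos {a : ℝ} (ha : 0 < a) {n k : ℕ}
    (hn : n ≠ 0) (hk : k ≤ n) : 0 < (-1) ^ k * chebyshevR a n (cos (k * π / n)) := by
  have hXU := Chebyshev.neg_one_pow_mul_X_mul_U_eval_cos_mul_pi_div_nonneg hk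
  set xU := cos (k * π / n) * (Chebyshev.U ℝ ((n : ℤ) - 1)).eval (cos (k * π / n))
  have h : (-1) ^ k * chebyshevR a n (cos (k * π / n))
      = (1 / √(a ^ 2 + 1)) * (√(a ^ 2 + 1) * ((-1) ^ k * xU) + a * ((-1) ^ k) ^ 2) := by
    rw [chebyshevR, Chebyshev.T_eval_cos_mul_pi_div hn]; ring
  rw [h, ← pow_mul, Even.neg_one_pow ⟨k, mul_two k⟩, mul_one]
  positivity

/-- At the extreme points of `T_n` the polynomial `R_n` alternates in sign, and hence it
has a zero in each of the `n` intervals between consecutive extreme points. -/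
theorem stmt5 (a : ℝ) (ha : 0 < a) (n : ℕ) (hn : 1 ≤ n) :
    (∀ k : ℕ, k ≤ n →
      Real.sign ((1 / Real.sqrt (a ^ 2 + 1)) *
        (Real.sqrt (a ^ 2 + 1) * Real.cos (k * Real.pi / n) *
            (Polynomial.Chebyshev.U ℝ ((n : ℤ) - 1)).eval (Real.cos (k * Real.pi / n)) +
          a * (Polynomial.Chebyshev.T ℝ (n : ℤ)).eval (Real.cos (k * Real.pi / n)))) =
        (-1 : ℝ) ^ k) ∧
    (∀ k : ℕ, k < n →
      ∃ x ∈ Set.Ioo (Real.cos ((k + 1) * Real.pi / n)) (Real.cos (k * Real.pi / n)),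
        (1 / Real.sqrt (a ^ 2 + 1)) *
          (Real.sqrt (a ^ 2 + 1) * x * (Polynomial.Chebyshev.U ℝ ((n : ℤ) - 1)).eval x +
            a * (Polynomial.Chebyshev.T ℝ (n : ℤ)).eval x) = 0) := by
  have alternates (k : ℕ) (hk : k ≤ n) : 0 < (-1) ^ k * chebyshevR a n (cos (k * π / n)) :=
    neg_one_pow_mul_chebyshevR_cos_mul_pi_div_pos ha (by omega) hk
  refine ⟨fun k hk => Real.sign_eq_neg_one_pow_of_pos (alternates k hk), fun k hk => ?_⟩
  have hnext := alternates (k + 1) hk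
  push_cast at hnext
  exact exists_mem_Ioo_eq_zero_of_mul_neg (cos_succ_mul_pi_div_lt hk).le
    (continuous_chebyshevR a n).continuousOn
    (mul_neg_of_neg_one_pow_succ_mul_pos_of_neg_one_pow_mul_pos hnext (alternates k hk.le))
end

section
/- For a > 0 and n >= 1, the value of Q_n at the purely imaginary point ai is Q_n(ai) = -(i)^n * sqrt(a^2+1) * (a + sqrt(a^2+1))^{n-1}, where Q_n satisfies Q_1(z) = -(az+i)/sqrt(a^2+1), Q_2(z) = (-(a+sqrt(a^2+1))z^2 - iz + sqrt(a^2+1))/sqrt(a^2+1), and Q_{n+1}(z) = 2z Q_n(z) - Q_{n-1}(z). In particular |Q_n(ai)| = sqrt(a^2+1) (a+sqrt(a^2+1))^{n-1}. -/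
/-!
Put `s = √(a² + 1)`. Since `(a + s)² = 2a(a + s) + 1`, the number `w = i(a + s)` is a root of
`w² = 2(ai)w - 1`, so `n ↦ -is · wⁿ` solves the recurrence satisfied by `n ↦ Q_{n+1}(ai)`.
Both sequences start with `-is, s(a + s)`, hence they coincide, and `-is · wⁿ⁻¹` is the claimed
value of `Q_n(ai)`. Its modulus is `s(a + s)ⁿ⁻¹` because `a + s > 0`.
-/

open Complex

namespace LinearRecurrence

variable {R : Type*} [CommRing R]

def chebyshev (c : R) : LinearRecurrence R := ⟨2, ![-1, c]⟩

theorem isSolution_chebyshev_iff {c : R} {u : ℕ → R} :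
    (chebyshev c).IsSolution u ↔ ∀ n, u (n + 2) = c * u (n + 1) - u n := by
  refine forall_congr' fun n => ?_
  change u (n + 2) = ∑ i : Fin 2, ![-1, c] i * u (n + i) ↔ _
  rw [Fin.sum_univ_two]
  simp [sub_eq_neg_add]

theorem isSolution_chebyshev_geom {c w : R} (hw : w ^ 2 = c * w - 1) (k : R) :
    (chebyshev c).IsSolution fun n => k * w ^ n :=
  isSolution_chebyshev_iff.2 fun n => by linear_combination k * w ^ n * hw

end LinearRecurrence

theorem Real.add_sqrt_sq_add_one_pos (a : ℝ) : 0 < a + √(a ^ 2 + 1) := by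
  rw [← neg_lt_iff_pos_add']
  exact Real.lt_sqrt_of_sq_lt (by rw [neg_sq]; exact lt_add_one _)

theorem stmt6_general (a : ℝ) (Q : ℕ → ℂ → ℂ)
    (hQ1 : ∀ z : ℂ, Q 1 z = -((a : ℂ) * z + Complex.I) / (Real.sqrt (a ^ 2 + 1) : ℂ))
    (hQ2 : ∀ z : ℂ, Q 2 z =
      (-(((a : ℂ) + (Real.sqrt (a ^ 2 + 1) : ℂ))) * z ^ 2 - Complex.I * z +
        (Real.sqrt (a ^ 2 + 1) : ℂ)) / (Real.sqrt (a ^ 2 + 1) : ℂ))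
    (hrec : ∀ n : ℕ, 2 ≤ n → ∀ z : ℂ, Q (n + 1) z = 2 * z * Q n z - Q (n - 1) z) :
    ∀ n : ℕ, 1 ≤ n →
      Q n ((a : ℂ) * Complex.I) =
        -Complex.I ^ n * (Real.sqrt (a ^ 2 + 1) : ℂ) *
          ((a : ℂ) + (Real.sqrt (a ^ 2 + 1) : ℂ)) ^ (n - 1) ∧
      ‖Q n ((a : ℂ) * Complex.I)‖ =
        Real.sqrt (a ^ 2 + 1) * (a + Real.sqrt (a ^ 2 + 1)) ^ (n - 1) := by
  have hr := Real.add_sqrt_sq_add_one_pos a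
  set s := Real.sqrt (a ^ 2 + 1)
  have hs : 0 < s := Real.sqrt_pos.2 (by positivity)
  have hs_sq : (s : ℂ) ^ 2 = a ^ 2 + 1 := by exact_mod_cast Real.sq_sqrt (by positivity)
  have hQ : (fun n => Q (n + 1) (a * I)) = fun n => -I * s * (I * (a + s)) ^ n := by
    refine ((LinearRecurrence.chebyshev (2 * (a * I))).eq_iff_eqOn_range_order _ _ ?_ ?_).2 ?_
    · exact LinearRecurrence.isSolution_chebyshev_iff.2 fun n => hrec (n + 2) (by omega) _
    · refine LinearRecurrence.isSolution_chebyshev_geom ?_ _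
      linear_combination (s ^ 2 - a ^ 2 : ℂ) * I_sq - hs_sq
    · have hs0 : (s : ℂ) ≠ 0 := by exact_mod_cast hs.ne'
      intro n hn
      obtain rfl | rfl : n = 0 ∨ n = 1 := by
        simp only [LinearRecurrence.chebyshev, Finset.coe_range, Set.mem_Iio] at hn; omega
      · simp only [hQ1]
        field_simp
        linear_combination hs_sq
      · simp only [hQ2]
        field_simp
        linear_combination ((s ^ 2 - a ^ 2) * (a + s) - a : ℂ) * I_sq - (a + s : ℂ) * hs_sq
  intro n hn
  obtain ⟨m, rfl⟩ := Nat.exists_eq_add_of_le' hn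
  have hval : Q (m + 1) (a * I) = -I ^ (m + 1) * s * (a + s) ^ m := by
    rw [congrFun hQ m, mul_pow]; ring
  have hnorm : ‖(a : ℂ) + s‖ = a + s := by rw [← ofReal_add, Complex.norm_of_nonneg hr.le]
  refine ⟨by simpa using hval, ?_⟩
  simp [hval, hnorm, abs_of_pos hs]

/-- Value of the recursively defined polynomial `Q_n` at the purely imaginary point `ai`. -/
theorem stmt6 (a : ℝ) (ha : 0 < a) (Q : ℕ → ℂ → ℂ)
    (hQ1 : ∀ z : ℂ, Q 1 z = -((a : ℂ) * z + Complex.I) / (Real.sqrt (a ^ 2 + 1) : ℂ))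
    (hQ2 : ∀ z : ℂ, Q 2 z =
      (-(((a : ℂ) + (Real.sqrt (a ^ 2 + 1) : ℂ))) * z ^ 2 - Complex.I * z +
        (Real.sqrt (a ^ 2 + 1) : ℂ)) / (Real.sqrt (a ^ 2 + 1) : ℂ))
    (hrec : ∀ n : ℕ, 2 ≤ n → ∀ z : ℂ, Q (n + 1) z = 2 * z * Q n z - Q (n - 1) z) :
    ∀ n : ℕ, 1 ≤ n →
      Q n ((a : ℂ) * Complex.I) =
        -Complex.I ^ n * (Real.sqrt (a ^ 2 + 1) : ℂ) *
          ((a : ℂ) + (Real.sqrt (a ^ 2 + 1) : ℂ)) ^ (n - 1) ∧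
      ‖Q n ((a : ℂ) * Complex.I)‖ =
        Real.sqrt (a ^ 2 + 1) * (a + Real.sqrt (a ^ 2 + 1)) ^ (n - 1) :=
  stmt6_general a Q hQ1 hQ2 hrec
end

section
/- For a > 0 and n >= 1, R_{n-1}(ai) = i^{n-1} * (a/sqrt(a^2+1)) * (a + sqrt(a^2+1))^{n-1}, where R_{n-1}(z) = (1/sqrt(a^2+1))( sqrt(a^2+1) z U_{n-2}(z) + a T_{n-1}(z) ) is evaluated at the purely imaginary point ai. -/
open Polynomial

/-!
If `ζ` is a root of `Y² - 2zY + 1`, both sides of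
`T_k(z) + (ζ - z) U_{k-1}(z) = ζ^k` satisfy the Chebyshev recurrence and agree for `k = 0, 1`.
At `z = ai` the root `ζ = i(a + √(a² + 1))` has `ζ - z = i√(a² + 1)`, which turns the
bracket in `R_{n-1}(ai)` into `a ζ^{n-1}`.
-/

namespace Polynomial.Chebyshev

theorem eval_T_add_mul_eval_U_sub_one {R : Type*} [CommRing R] {z ζ : R}
    (hζ : ζ ^ 2 - 2 * z * ζ + 1 = 0) (k : ℕ) :
    (T R k).eval z + (ζ - z) * (U R ((k : ℤ) - 1)).eval z = ζ ^ k := by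
  induction k using Nat.twoStepInduction with
  | zero => simp
  | one => simp
  | more k ih₀ ih₁ =>
    have hT : T R ((k + 2 : ℕ) : ℤ) = 2 * X * T R ((k + 1 : ℕ) : ℤ) - T R k := by
      push_cast; exact T_add_two R k
    have hU : U R ((k + 2 : ℕ) - 1 : ℤ) =
        2 * X * U R ((k + 1 : ℕ) - 1 : ℤ) - U R ((k : ℤ) - 1) := by
      simpa [add_sub_assoc, sub_add_eq_add_sub] using U_add_two R ((k : ℤ) - 1)
    simp only [hT, hU, eval_sub, eval_mul, eval_ofNat, eval_X]
    linear_combination 2 * z * ih₁ - ih₀ - ζ ^ k * hζ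

end Polynomial.Chebyshev

theorem stmt9_general (a : ℝ) (n : ℕ) (hn : 1 ≤ n) :
    (1 / (Real.sqrt (a ^ 2 + 1) : ℂ)) *
        ((Real.sqrt (a ^ 2 + 1) : ℂ) * ((a : ℂ) * Complex.I) *
            (Polynomial.Chebyshev.U ℂ ((n : ℤ) - 2)).eval ((a : ℂ) * Complex.I) +
          (a : ℂ) * (Polynomial.Chebyshev.T ℂ ((n : ℤ) - 1)).eval ((a : ℂ) * Complex.I)) =
      Complex.I ^ (n - 1) * ((a : ℂ) / (Real.sqrt (a ^ 2 + 1) : ℂ)) *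
        ((a : ℂ) + (Real.sqrt (a ^ 2 + 1) : ℂ)) ^ (n - 1) := by
  set s : ℂ := (Real.sqrt (a ^ 2 + 1) : ℂ)
  have hs : s ^ 2 = (a : ℂ) ^ 2 + 1 := by
    simp only [s, ← Complex.ofReal_pow, Real.sq_sqrt (by positivity : (0 : ℝ) ≤ a ^ 2 + 1)]
    push_cast; ring
  have hζ : (Complex.I * (a + s)) ^ 2 - 2 * (a * Complex.I) * (Complex.I * (a + s)) + 1 = 0 := by
    linear_combination ((a + s) ^ 2 - 2 * a * (a + s)) * Complex.I_sq - hs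
  obtain ⟨k, rfl⟩ := Nat.exists_eq_add_of_le' hn
  have key := Polynomial.Chebyshev.eval_T_add_mul_eval_U_sub_one hζ k
  rw [show ((k + 1 : ℕ) : ℤ) - 2 = (k : ℤ) - 1 by push_cast; ring,
    show ((k + 1 : ℕ) : ℤ) - 1 = k by push_cast; ring, Nat.add_sub_cancel]
  rw [mul_pow] at key
  linear_combination (a / s) * key

/-- Value of `R_{n-1}` at the purely imaginary point `ai`. -/
theorem stmt9 (a : ℝ) (ha : 0 < a) (n : ℕ) (hn : 1 ≤ n) :
    (1 / (Real.sqrt (a ^ 2 + 1) : ℂ)) *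
        ((Real.sqrt (a ^ 2 + 1) : ℂ) * ((a : ℂ) * Complex.I) *
            (Polynomial.Chebyshev.U ℂ ((n : ℤ) - 2)).eval ((a : ℂ) * Complex.I) +
          (a : ℂ) * (Polynomial.Chebyshev.T ℂ ((n : ℤ) - 1)).eval ((a : ℂ) * Complex.I)) =
      Complex.I ^ (n - 1) * ((a : ℂ) / (Real.sqrt (a ^ 2 + 1) : ℂ)) *
        ((a : ℂ) + (Real.sqrt (a ^ 2 + 1) : ℂ)) ^ (n - 1) :=
  stmt9_general a n hn
end

section
/- For real a > 0 and n >= 1, sqrt(a^2+1) * (a + sqrt(a^2+1))^{n-1} - |T_n(ai)| = (sqrt(a^2+1) - a) * |T_{n-1}(ai)|, where T_n is the Chebyshev polynomial of the first kind evaluated at the purely imaginary point ai. -/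
/-!
Since `2 T_n((x + y) / 2) = x ^ n + y ^ n` whenever `x y = 1`, taking `x = b i`, `y = -c i` with
`b = √(a² + 1) + a` and `c = √(a² + 1) - a = b⁻¹` gives `|T_n(a i)| = (b ^ n + (-c) ^ n) / 2`,
the bracket being nonnegative because `c ≤ b`. With this closed form the claimed identity is a
polynomial identity in `a` and `√(a² + 1)`.
-/

open Polynomial

namespace Polynomial.Chebyshev

theorem two_mul_T_eval_eq_pow_add_pow {R : Type*} [CommRing R] {x y z : R} (hxy : x * y = 1)
    (hz : 2 * z = x + y) (n : ℕ) : 2 * (T R n).eval z = x ^ n + y ^ n := by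
  rw [← dickson_one_one_eval_add_inv x y hxy, dickson_one_one_eq_chebyshev_C, ← hz]
  simpa using (congrArg (eval z) (C_comp_two_mul_X R n)).symm

theorem two_mul_T_eval_mul_I (a : ℝ) (n : ℕ) :
    2 * (T ℂ n).eval (a * Complex.I) =
      Complex.I ^ n * ((a + √(a ^ 2 + 1)) ^ n + (a - √(a ^ 2 + 1)) ^ n : ℝ) := by
  have hprod : (a + √(a ^ 2 + 1)) * (a - √(a ^ 2 + 1)) = -1 := by
    linear_combination -Real.sq_sqrt (by positivity : 0 ≤ a ^ 2 + 1)
  have hxy : ((a + √(a ^ 2 + 1) : ℝ) * Complex.I) * ((a - √(a ^ 2 + 1) : ℝ) * Complex.I) = 1 := by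
    rw [mul_mul_mul_comm, Complex.I_mul_I, ← Complex.ofReal_mul, hprod]
    norm_num
  rw [two_mul_T_eval_eq_pow_add_pow hxy (by push_cast; ring), mul_pow, mul_pow]
  push_cast
  ring

theorem norm_T_eval_mul_I {a : ℝ} (ha : 0 ≤ a) (n : ℕ) :
    ‖(T ℂ n).eval (a * Complex.I)‖ = ((a + √(a ^ 2 + 1)) ^ n + (a - √(a ^ 2 + 1)) ^ n) / 2 := by
  have hdiff : |a - √(a ^ 2 + 1)| ≤ a + √(a ^ 2 + 1) :=
    abs_sub_le_iff.2 ⟨by linarith [Real.sqrt_nonneg (a ^ 2 + 1)], by linarith⟩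
  have hpow : 0 ≤ (a + √(a ^ 2 + 1)) ^ n + (a - √(a ^ 2 + 1)) ^ n := by
    have := pow_le_pow_left₀ (abs_nonneg _) hdiff n
    rw [← abs_pow] at this
    linarith [neg_abs_le ((a - √(a ^ 2 + 1)) ^ n)]
  have h := congrArg norm (two_mul_T_eval_mul_I a n)
  rw [norm_mul, norm_mul, Complex.norm_ofNat, norm_pow, Complex.norm_I, one_pow, one_mul,
    Complex.norm_real, Real.norm_of_nonneg hpow] at h
  linarith

end Polynomial.Chebyshev

/-- Comparison of the extremal growth value with `|T_n(ai)|`. -/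
theorem stmt10 (a : ℝ) (ha : 0 < a) (n : ℕ) (hn : 1 ≤ n) :
    Real.sqrt (a ^ 2 + 1) * (a + Real.sqrt (a ^ 2 + 1)) ^ (n - 1) -
        ‖(Polynomial.Chebyshev.T ℂ (n : ℤ)).eval ((a : ℂ) * Complex.I)‖ =
      (Real.sqrt (a ^ 2 + 1) - a) *
        ‖(Polynomial.Chebyshev.T ℂ ((n : ℤ) - 1)).eval ((a : ℂ) * Complex.I)‖ := by
  obtain ⟨m, rfl⟩ := Nat.exists_eq_add_of_le' hn
  rw [Nat.add_sub_cancel, show ((m + 1 : ℕ) : ℤ) - 1 = m by omega,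
    Chebyshev.norm_T_eval_mul_I ha.le, Chebyshev.norm_T_eval_mul_I ha.le]
  ring
end

section
/- Let K be a compact set in C^d, mu a probability measure on K whose Gram matrix on polynomials of degree at most n is nonsingular, and z_0 a point with z_0 not in K. Define P(z) = K_n^mu(z_0, z) / sqrt(K_n^mu(z_0, z_0)), where K_n^mu is the reproducing (Bergman) kernel of the space of polynomials of degree <= n with the L^2(mu) inner product. If sup_{x in K} |P(x)| <= 1, then for every polynomial p of degree <= n with sup_{x in K} |p(x)| <= 1 one has |p(z_0)| <= |P(z_0)|; i.e., P is a polynomial of extremal growth at z_0 relative to K. -/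
/-!
Expanding `p = ∑ cₖ qₖ` in the orthonormal basis, Parseval gives `∑ |cₖ|² = ‖p‖²_{L²(μ)} ≤ 1`
because `μ` is a probability measure carried by `K` and `|p| ≤ 1` on `K`. Cauchy–Schwarz then
bounds `|p(z₀)|²` by `∑ |qₖ(z₀)|² = K_n^μ(z₀, z₀)`, which is exactly `|P(z₀)|²`.
-/

open MeasureTheory MvPolynomial ComplexConjugate

theorem norm_sum_mul_sq_le {ι : Type*} [Fintype ι] (c w : ι → ℂ) :
    ‖∑ k, c k * w k‖ ^ 2 ≤ (∑ k, ‖c k‖ ^ 2) * ∑ k, ‖w k‖ ^ 2 := by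
  calc ‖∑ k, c k * w k‖ ^ 2 ≤ (∑ k, ‖c k‖ * ‖w k‖) ^ 2 := by
        gcongr
        exact (norm_sum_le _ _).trans_eq (by simp_rw [norm_mul])
    _ ≤ (∑ k, ‖c k‖ ^ 2) * ∑ k, ‖w k‖ ^ 2 := Finset.sum_mul_sq_le_sq_mul_sq _ _ _

section Orthonormal

variable {X ι : Type*} [MeasurableSpace X] [Fintype ι] [DecidableEq ι]
  {μ : Measure X} {g : ι → X → ℂ}

theorem integral_norm_sq_sum_mul_of_orthonormal
    (hint : ∀ j k, Integrable (fun x => conj (g j x) * g k x) μ)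
    (horth : ∀ j k, ∫ x, conj (g j x) * g k x ∂μ = if j = k then 1 else 0) (c : ι → ℂ) :
    ∫ x, ‖∑ k, c k * g k x‖ ^ 2 ∂μ = ∑ k, ‖c k‖ ^ 2 := by
  have hexpand : ∀ x, ((‖∑ k, c k * g k x‖ ^ 2 : ℝ) : ℂ) =
      ∑ j, ∑ k, conj (c j) * c k * (conj (g j x) * g k x) := by
    intro x
    rw [Complex.ofReal_pow, ← Complex.conj_mul', map_sum, Finset.sum_mul_sum]
    refine Finset.sum_congr rfl fun j _ => Finset.sum_congr rfl fun k _ => ?_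
    rw [map_mul]
    ring
  have hint' : ∀ j k, Integrable (fun x => conj (c j) * c k * (conj (g j x) * g k x)) μ :=
    fun j k => (hint j k).const_mul _
  apply Complex.ofReal_injective
  rw [← integral_complex_ofReal]
  simp_rw [hexpand]
  rw [integral_finsetSum _ fun j _ => integrable_finsetSum _ fun k _ => hint' j k]
  simp_rw [integral_finsetSum _ fun k _ => hint' _ k, integral_const_mul, horth, mul_ite,
    mul_one, mul_zero, Finset.sum_ite_eq, Finset.mem_univ, if_true, Complex.conj_mul']
  push_cast
  rfl

theorem norm_sq_le_integral_norm_sq_mul_kernel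
    (hint : ∀ j k, Integrable (fun x => conj (g j x) * g k x) μ)
    (horth : ∀ j k, ∫ x, conj (g j x) * g k x ∂μ = if j = k then 1 else 0) (c : ι → ℂ) (x : X) :
    ‖∑ k, c k * g k x‖ ^ 2 ≤ (∫ y, ‖∑ k, c k * g k y‖ ^ 2 ∂μ) * ∑ k, ‖g k x‖ ^ 2 := by
  rw [integral_norm_sq_sum_mul_of_orthonormal hint horth]
  exact norm_sum_mul_sq_le c fun k => g k x

end Orthonormal

theorem integral_norm_sq_le_one {X E : Type*} [MeasurableSpace X] [NormedAddCommGroup E]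
    {μ : Measure X} [IsProbabilityMeasure μ] {f : X → E} (hf : ∀ᵐ x ∂μ, ‖f x‖ ≤ 1) :
    ∫ x, ‖f x‖ ^ 2 ∂μ ≤ 1 := by
  calc ∫ x, ‖f x‖ ^ 2 ∂μ ≤ ∫ _, (1 : ℝ) ∂μ :=
        integral_mono_of_nonneg (.of_forall fun _ => by positivity) (integrable_const 1)
          (hf.mono fun x hx => pow_le_one₀ (norm_nonneg _) hx)
    _ = 1 := by simp

theorem Continuous.integrable_of_isCompact_of_measure_compl_eq_zero {X E : Type*}
    [MeasurableSpace X] [TopologicalSpace X] [OpensMeasurableSpace X] [T2Space X]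
    [NormedAddCommGroup E] {μ : Measure X} [IsFiniteMeasure μ] {K : Set X} (hK : IsCompact K)
    (hμK : μ Kᶜ = 0) {f : X → E} (hf : Continuous f) : Integrable f μ := by
  rw [← Measure.restrict_eq_self_of_ae_mem (show ∀ᵐ x ∂μ, x ∈ K from hμK)]
  exact hf.continuousOn.integrableOn_compact hK

theorem norm_sum_conj_mul_self_div_sqrt {ι : Type*} [Fintype ι] (w : ι → ℂ) :
    ‖(∑ k, conj (w k) * w k) / (Real.sqrt (∑ k, ‖w k‖ ^ 2) : ℂ)‖ = Real.sqrt (∑ k, ‖w k‖ ^ 2) := by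
  simp_rw [Complex.conj_mul', ← Complex.ofReal_pow, ← Complex.ofReal_sum, ← Complex.ofReal_div,
    Complex.norm_real, Real.div_sqrt, Real.norm_of_nonneg (Real.sqrt_nonneg _)]

theorem stmt12_general (d n N : ℕ) (K : Set (Fin d → ℂ)) (hK : IsCompact K)
    (μ : Measure (Fin d → ℂ)) (hμ : IsProbabilityMeasure μ) (hsupp : μ Kᶜ = 0)
    (z0 : Fin d → ℂ)
    (q : Fin N → MvPolynomial (Fin d) ℂ)
    (horth : ∀ j k, ∫ z, (starRingEnd ℂ) (MvPolynomial.eval z (q j)) *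
        MvPolynomial.eval z (q k) ∂μ = if j = k then 1 else 0)
    (hspan : ∀ p : MvPolynomial (Fin d) ℂ, p.totalDegree ≤ n →
      p ∈ Submodule.span ℂ (Set.range q))
    (P : (Fin d → ℂ) → ℂ)
    (hP : ∀ z, P z =
      (∑ k, (starRingEnd ℂ) (MvPolynomial.eval z0 (q k)) * MvPolynomial.eval z (q k)) /
        (Real.sqrt (∑ k, ‖MvPolynomial.eval z0 (q k)‖ ^ 2) : ℂ)) :
    ∀ p : MvPolynomial (Fin d) ℂ, p.totalDegree ≤ n →
      (∀ x ∈ K, ‖MvPolynomial.eval x p‖ ≤ 1) →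
      ‖MvPolynomial.eval z0 p‖ ≤ ‖P z0‖ := by
  intro p hpdeg hpK
  obtain ⟨c, rfl⟩ := (Submodule.mem_span_range_iff_exists_fun ℂ).mp (hspan p hpdeg)
  have hint : ∀ j k, Integrable (fun z => conj (eval z (q j)) * eval z (q k)) μ := fun j k =>
    ((Complex.continuous_conj.comp (continuous_eval _)).mul
      (continuous_eval _)).integrable_of_isCompact_of_measure_compl_eq_zero hK hsupp
  have hL2 : ∫ z, ‖∑ k, c k * eval z (q k)‖ ^ 2 ∂μ ≤ 1 :=
    integral_norm_sq_le_one <| (show ∀ᵐ z ∂μ, z ∈ K from hsupp).mono fun z hz => by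
      simpa [smul_eq_C_mul] using hpK z hz
  have hkernel := norm_sq_le_integral_norm_sq_mul_kernel hint horth c z0
  rw [hP, norm_sum_conj_mul_self_div_sqrt, Real.le_sqrt (norm_nonneg _) (by positivity)]
  simpa [smul_eq_C_mul] using hkernel.trans (mul_le_of_le_one_left (by positivity) hL2)

/-- If the normalized kernel polynomial `P(z) = K_n^μ(z_0,z)/√(K_n^μ(z_0,z_0))` is bounded
by `1` on `K`, then it is a polynomial of extremal growth at `z_0` relative to `K`.
Here the kernel is built from an orthonormal basis `q` of the polynomials of degree at most
`n` in `L^2(μ)` (whose existence expresses the nonsingularity of the Gram matrix). -/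
theorem stmt12 (d n N : ℕ) (K : Set (Fin d → ℂ)) (hK : IsCompact K)
    (μ : Measure (Fin d → ℂ)) (hμ : IsProbabilityMeasure μ) (hsupp : μ Kᶜ = 0)
    (z0 : Fin d → ℂ) (hz0 : z0 ∉ K)
    (q : Fin N → MvPolynomial (Fin d) ℂ)
    (hqdeg : ∀ k, (q k).totalDegree ≤ n)
    (horth : ∀ j k, ∫ z, (starRingEnd ℂ) (MvPolynomial.eval z (q j)) *
        MvPolynomial.eval z (q k) ∂μ = if j = k then 1 else 0)
    (hspan : ∀ p : MvPolynomial (Fin d) ℂ, p.totalDegree ≤ n →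
      p ∈ Submodule.span ℂ (Set.range q))
    (P : (Fin d → ℂ) → ℂ)
    (hP : ∀ z, P z =
      (∑ k, (starRingEnd ℂ) (MvPolynomial.eval z0 (q k)) * MvPolynomial.eval z (q k)) /
        (Real.sqrt (∑ k, ‖MvPolynomial.eval z0 (q k)‖ ^ 2) : ℂ))
    (hPbound : ∀ x ∈ K, ‖P x‖ ≤ 1) :
    ∀ p : MvPolynomial (Fin d) ℂ, p.totalDegree ≤ n →
      (∀ x ∈ K, ‖MvPolynomial.eval x p‖ ≤ 1) →
      ‖MvPolynomial.eval z0 p‖ ≤ ‖P z0‖ :=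
  stmt12_general d n N K hK μ hμ hsupp z0 q horth hspan P hP
end

section
/- For a > 0, the degree-1 polynomial P(z) = (1 - i a z)/sqrt(a^2+1) satisfies |P(x)| <= 1 for all x in [-1,1], and for every complex polynomial p of degree at most 1 with |p(x)| <= 1 on [-1,1], one has |p(ai)| <= |P(ai)| = sqrt(a^2+1). -/
/-!
A polynomial of degree at most one is determined by its values at `±1`:
`p z = (1 + z)/2 · p 1 + (1 - z)/2 · p (-1)`. Hence `|p z| ≤ (|1 + z| + |1 - z|)/2` whenever
`|p| ≤ 1` on `[-1, 1]`, and at `z = ai` the right-hand side is `√(a² + 1)`, the value of `P`.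
-/

open Polynomial

namespace Polynomial

theorem eval_eq_interpolate_of_degree_le_one {K : Type*} [Field K] [NeZero (2 : K)] {p : K[X]}
    (hp : p.degree ≤ 1) (z : K) :
    p.eval z = (1 + z) / 2 * p.eval 1 + (1 - z) / 2 * p.eval (-1) := by
  rw [eq_X_add_C_of_degree_le_one hp]
  simp only [eval_add, eval_mul, eval_C, eval_X]
  field_simp
  ring

theorem norm_eval_le_of_degree_le_one {K : Type*} [NormedField K] [NeZero (2 : K)] {p : K[X]}
    (hp : p.degree ≤ 1) {M : ℝ} (h₁ : ‖p.eval 1‖ ≤ M) (hneg : ‖p.eval (-1)‖ ≤ M) (z : K) :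
    ‖p.eval z‖ ≤ (‖1 + z‖ + ‖1 - z‖) / ‖(2 : K)‖ * M := by
  rw [eval_eq_interpolate_of_degree_le_one hp]
  calc ‖(1 + z) / 2 * p.eval 1 + (1 - z) / 2 * p.eval (-1)‖
      ≤ ‖1 + z‖ / ‖(2 : K)‖ * ‖p.eval 1‖ + ‖1 - z‖ / ‖(2 : K)‖ * ‖p.eval (-1)‖ := by
        simpa only [norm_mul, norm_div] using
          norm_add_le ((1 + z) / 2 * p.eval 1) ((1 - z) / 2 * p.eval (-1))
    _ ≤ ‖1 + z‖ / ‖(2 : K)‖ * M + ‖1 - z‖ / ‖(2 : K)‖ * M := by gcongr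
    _ = (‖1 + z‖ + ‖1 - z‖) / ‖(2 : K)‖ * M := by ring

end Polynomial

namespace Complex

theorem norm_one_add_ofReal_mul_I (y : ℝ) : ‖1 + y * I‖ = √(1 + y ^ 2) := by
  simpa using norm_add_mul_I 1 y

theorem norm_one_sub_ofReal_mul_I (y : ℝ) : ‖1 - y * I‖ = √(1 + y ^ 2) := by
  simpa [sub_eq_add_neg] using norm_one_add_ofReal_mul_I (-y)

end Complex

open Complex

theorem stmt16_general (a : ℝ) :
    (∀ x : ℝ, x ∈ Set.Icc (-1 : ℝ) 1 →
      ‖(1 - Complex.I * (a : ℂ) * (x : ℂ)) / (Real.sqrt (a ^ 2 + 1) : ℂ)‖ ≤ 1) ∧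
    ‖(1 - Complex.I * (a : ℂ) * ((a : ℂ) * Complex.I)) /
        (Real.sqrt (a ^ 2 + 1) : ℂ)‖ = Real.sqrt (a ^ 2 + 1) ∧
    ∀ p : Polynomial ℂ, p.degree ≤ 1 →
      (∀ x : ℝ, x ∈ Set.Icc (-1 : ℝ) 1 → ‖p.eval (x : ℂ)‖ ≤ 1) →
      ‖p.eval ((a : ℂ) * Complex.I)‖ ≤
        ‖(1 - Complex.I * (a : ℂ) * ((a : ℂ) * Complex.I)) /
          (Real.sqrt (a ^ 2 + 1) : ℂ)‖ := by
  have hs : 0 < √(a ^ 2 + 1) := by positivity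
  have hP : ‖(1 - I * a * (a * I)) / (√(a ^ 2 + 1) : ℂ)‖ = √(a ^ 2 + 1) := by
    have : 1 - I * a * (a * I) = ((√(a ^ 2 + 1) ^ 2 : ℝ) : ℂ) := by
      rw [Real.sq_sqrt (by positivity)]
      push_cast
      linear_combination -(a : ℂ) ^ 2 * I_sq
    rw [this, ofReal_pow, pow_two, mul_div_cancel_right₀ _ (ofReal_ne_zero.2 hs.ne'),
      norm_real, Real.norm_of_nonneg hs.le]
  refine ⟨fun x hx => ?_, hP, fun p hp hbound => ?_⟩
  · have hx2 : x ^ 2 ≤ 1 := sq_le_one_iff_abs_le_one x |>.2 (abs_le.2 hx)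
    rw [norm_div, norm_real, Real.norm_of_nonneg hs.le, div_le_one hs, mul_assoc, mul_comm,
      ← ofReal_mul, norm_one_sub_ofReal_mul_I]
    apply Real.sqrt_le_sqrt
    nlinarith [sq_nonneg a]
  · rw [hP]
    have h := Polynomial.norm_eval_le_of_degree_le_one hp
      (by simpa using hbound 1 (by norm_num)) (by simpa using hbound (-1) (by norm_num)) (a * I)
    rwa [norm_one_add_ofReal_mul_I, norm_one_sub_ofReal_mul_I, Complex.norm_two, mul_one,
      ← two_mul, mul_div_cancel_left₀ _ two_ne_zero, add_comm] at h

/-- The degree-1 polynomial `(1 - iaz)/√(a²+1)` is bounded by `1` on `[-1,1]` and has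
extremal growth at the purely imaginary point `ai`. -/
theorem stmt16 (a : ℝ) (ha : 0 < a) :
    (∀ x : ℝ, x ∈ Set.Icc (-1 : ℝ) 1 →
      ‖(1 - Complex.I * (a : ℂ) * (x : ℂ)) / (Real.sqrt (a ^ 2 + 1) : ℂ)‖ ≤ 1) ∧
    ‖(1 - Complex.I * (a : ℂ) * ((a : ℂ) * Complex.I)) /
        (Real.sqrt (a ^ 2 + 1) : ℂ)‖ = Real.sqrt (a ^ 2 + 1) ∧
    ∀ p : Polynomial ℂ, p.degree ≤ 1 →
      (∀ x : ℝ, x ∈ Set.Icc (-1 : ℝ) 1 → ‖p.eval (x : ℂ)‖ ≤ 1) →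
      ‖p.eval ((a : ℂ) * Complex.I)‖ ≤
        ‖(1 - Complex.I * (a : ℂ) * ((a : ℂ) * Complex.I)) /
          (Real.sqrt (a ^ 2 + 1) : ℂ)‖ :=
  stmt16_general a
end

section
/- For a > 0 and all real x, the polynomial P(x) = (1/sqrt(a^2+1)) * ( -(a+sqrt(a^2+1)) x^2 - i x + sqrt(a^2+1) ) satisfies |P(x)|^2 = 1 + ((a + sqrt(a^2+1))^2/(a^2+1)) * x^2 (x^2 - 1). In particular |P(x)| <= 1 for x in [-1,1], with equality exactly at x in {-1, 0, 1}. -/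
/-! Writing `s = √(a²+1)` and `c = a + s`, the number `c` is a root of `c² - 2sc + 1 = 0`, and
this relation is exactly what makes the cross term of `|s - c x² - i x|²` collapse, giving
`|P(x)|² = 1 + (c/s)² x²(x² - 1)`. The factor `x²(x² - 1)` is `≤ 0` on `[-1, 1]` and vanishes
there only at `-1, 0, 1`. -/

open Complex

theorem Complex.sq_norm_quadratic_of_sq_add_one_eq {s c : ℝ} (hs : s ≠ 0)
    (hc : c ^ 2 + 1 = 2 * s * c) (x : ℝ) :
    ‖(1 / (s : ℂ)) * (-(c : ℂ) * (x : ℂ) ^ 2 - I * x + s)‖ ^ 2 =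
      1 + (c ^ 2 / s ^ 2) * (x ^ 2 * (x ^ 2 - 1)) := by
  rw [Complex.sq_norm, normSq_apply]
  simp only [← ofReal_pow, one_div, ← ofReal_inv, mul_re, mul_im, sub_re, sub_im, add_re, add_im,
    neg_re, neg_im, ofReal_re, ofReal_im, I_re, I_im]
  field_simp
  linear_combination x ^ 2 * hc

theorem Real.add_sqrt_sq_add_one_sq_add_one (a : ℝ) :
    (a + √(a ^ 2 + 1)) ^ 2 + 1 = 2 * √(a ^ 2 + 1) * (a + √(a ^ 2 + 1)) := by
  have := Real.sq_sqrt (by positivity : (0 : ℝ) ≤ a ^ 2 + 1)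
  linear_combination -this

theorem sq_mul_sq_sub_one_nonpos {x : ℝ} (hx : x ∈ Set.Icc (-1 : ℝ) 1) :
    x ^ 2 * (x ^ 2 - 1) ≤ 0 :=
  mul_nonpos_of_nonneg_of_nonpos (sq_nonneg x) (by nlinarith [hx.1, hx.2])

theorem sq_mul_sq_sub_one_eq_zero_iff {x : ℝ} :
    x ^ 2 * (x ^ 2 - 1) = 0 ↔ x = -1 ∨ x = 0 ∨ x = 1 := by
  rw [mul_eq_zero, pow_eq_zero_iff two_ne_zero, sub_eq_zero, sq_eq_one_iff]
  tauto

theorem stmt17_general (a : ℝ) :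
    ∀ x : ℝ,
      ‖((1 / (Real.sqrt (a ^ 2 + 1) : ℂ)) *
          (-(((a : ℝ) + Real.sqrt (a ^ 2 + 1) : ℝ) : ℂ) * (x : ℂ) ^ 2 -
            Complex.I * (x : ℂ) + (Real.sqrt (a ^ 2 + 1) : ℂ)))‖ ^ 2 =
        1 + ((a + Real.sqrt (a ^ 2 + 1)) ^ 2 / (a ^ 2 + 1)) * (x ^ 2 * (x ^ 2 - 1)) ∧
      (x ∈ Set.Icc (-1 : ℝ) 1 →
        (‖((1 / (Real.sqrt (a ^ 2 + 1) : ℂ)) *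
            (-(((a : ℝ) + Real.sqrt (a ^ 2 + 1) : ℝ) : ℂ) * (x : ℂ) ^ 2 -
              Complex.I * (x : ℂ) + (Real.sqrt (a ^ 2 + 1) : ℂ)))‖ ≤ 1 ∧
          (‖((1 / (Real.sqrt (a ^ 2 + 1) : ℂ)) *
              (-(((a : ℝ) + Real.sqrt (a ^ 2 + 1) : ℝ) : ℂ) * (x : ℂ) ^ 2 -
                Complex.I * (x : ℂ) + (Real.sqrt (a ^ 2 + 1) : ℂ)))‖ = 1 ↔
            x = -1 ∨ x = 0 ∨ x = 1))) := by
  intro x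
  have hs : Real.sqrt (a ^ 2 + 1) ^ 2 = a ^ 2 + 1 := Real.sq_sqrt (by positivity)
  have hP := Complex.sq_norm_quadratic_of_sq_add_one_eq (Real.sqrt_pos.2 (by positivity)).ne'
    (Real.add_sqrt_sq_add_one_sq_add_one a) x
  rw [hs] at hP
  refine ⟨hP, fun hx => ?_⟩
  have hC : 0 < (a + Real.sqrt (a ^ 2 + 1)) ^ 2 / (a ^ 2 + 1) :=
    div_pos (pow_pos (Real.add_sqrt_sq_add_one_pos a) 2) (by positivity)
  rw [← pow_le_one_iff_of_nonneg (norm_nonneg _) two_ne_zero,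
    ← pow_eq_one_iff_of_nonneg (norm_nonneg _) two_ne_zero, hP, add_eq_left,
    mul_eq_zero, or_iff_right hC.ne', sq_mul_sq_sub_one_eq_zero_iff]
  exact ⟨(add_le_iff_nonpos_right 1).2
    (mul_nonpos_of_nonneg_of_nonpos hC.le (sq_mul_sq_sub_one_nonpos hx)), Iff.rfl⟩

/-- Modulus identity for the degree-2 extremal polynomial, with the consequent bound on
`[-1,1]` and characterization of the equality points. -/
theorem stmt17 (a : ℝ) (ha : 0 < a) :
    ∀ x : ℝ,
      ‖((1 / (Real.sqrt (a ^ 2 + 1) : ℂ)) *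
          (-(((a : ℝ) + Real.sqrt (a ^ 2 + 1) : ℝ) : ℂ) * (x : ℂ) ^ 2 -
            Complex.I * (x : ℂ) + (Real.sqrt (a ^ 2 + 1) : ℂ)))‖ ^ 2 =
        1 + ((a + Real.sqrt (a ^ 2 + 1)) ^ 2 / (a ^ 2 + 1)) * (x ^ 2 * (x ^ 2 - 1)) ∧
      (x ∈ Set.Icc (-1 : ℝ) 1 →
        (‖((1 / (Real.sqrt (a ^ 2 + 1) : ℂ)) *
            (-(((a : ℝ) + Real.sqrt (a ^ 2 + 1) : ℝ) : ℂ) * (x : ℂ) ^ 2 -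
              Complex.I * (x : ℂ) + (Real.sqrt (a ^ 2 + 1) : ℂ)))‖ ≤ 1 ∧
          (‖((1 / (Real.sqrt (a ^ 2 + 1) : ℂ)) *
              (-(((a : ℝ) + Real.sqrt (a ^ 2 + 1) : ℝ) : ℂ) * (x : ℂ) ^ 2 -
                Complex.I * (x : ℂ) + (Real.sqrt (a ^ 2 + 1) : ℂ)))‖ = 1 ↔
            x = -1 ∨ x = 0 ∨ x = 1))) :=
  stmt17_general a
end

section
/- For a > 0 and n >= 1, the maximum of |p(ai)| over all complex polynomials p of degree at most n satisfying |p(x)| <= 1 for all x in [-1,1] equals sqrt(a^2+1) * (a + sqrt(a^2+1))^{n-1}, and this maximum is attained by the polynomial Q_n defined by Q_1(z) = -(az+i)/sqrt(a^2+1), Q_2(z) = (-(a+sqrt(a^2+1))z^2 - i z + sqrt(a^2+1))/sqrt(a^2+1), Q_{n+1}(z) = 2 z Q_n(z) - Q_{n-1}(z). -/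
/-!
Write `s = √(a²+1)` and `t = a + s`. Under the Joukowski substitution `2zu = u² + 1` the
recurrence has the closed form `4st uⁿ Qₙ(z) = -((tu + i)² u²⁽ⁿ⁻¹⁾ + (t + iu)²)`. For `z ∈ [-1,1]`
we may take `|u| = 1`; the two terms then have moduli adding up to `4st`, so `|Qₙ| ≤ 1` there,
while `u = ti` gives `|Qₙ(ai)| = s tⁿ⁻¹`.

For maximality, an intermediate value argument on the phase of `uⁿ / (t² + u²)` yields nodes
`x₀ > x₁ > ⋯ > xₙ` in `[-1,1]` with `|Qₙ(xₖ)| = 1` and `Qₙ(xₖ) ∈ (-1)ᵏ ℝ₊ i (ai - xₖ)`. Since the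
nodal weights alternate in sign in the same way, all terms of the Lagrange formula for
`Qₙ(ai)` point in one direction, so any `p` of degree `≤ n` bounded by `1` at the nodes satisfies
`|p(ai)| ≤ ∑ₖ |ℓₖ(ai)| = |Qₙ(ai)|`.
-/

open Polynomial Complex Finset
open scoped Real

theorem Lagrange.norm_eval_le_of_aligned {ι : Type*} [DecidableEq ι] {s : Finset ι}
    {v : ι → ℂ} (hv : Set.InjOn v s) {p q : ℂ[X]} (hp : p.degree < #s) (hq : q.degree < #s)
    {w c : ℂ}
    (hqw : ∀ i ∈ s, ∃ r : ℝ, 0 ≤ r ∧ q.eval (v i) * (Lagrange.basis s v i).eval w = r * c)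
    (hq1 : ∀ i ∈ s, ‖q.eval (v i)‖ = 1) (hp1 : ∀ i ∈ s, ‖p.eval (v i)‖ ≤ 1) :
    ‖p.eval w‖ ≤ ‖q.eval w‖ := by
  have eval_eq (f : ℂ[X]) (hf : f.degree < #s) :
      f.eval w = ∑ i ∈ s, f.eval (v i) * (Lagrange.basis s v i).eval w := by
    conv_lhs => rw [Lagrange.eq_interpolate hv hf]
    simp [Lagrange.interpolate_apply, eval_finsetSum]
  choose! r hr0 hr using hqw
  have hq_norm : ‖q.eval w‖ = ∑ i ∈ s, ‖(Lagrange.basis s v i).eval w‖ := by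
    calc ‖q.eval w‖ = ‖(∑ i ∈ s, r i : ℝ) * c‖ := by
          rw [eval_eq q hq, sum_congr rfl hr, ← sum_mul]; push_cast; rfl
      _ = ∑ i ∈ s, ‖(r i : ℂ) * c‖ := by
          rw [norm_mul, Complex.norm_real, Real.norm_of_nonneg (sum_nonneg hr0), sum_mul]
          refine sum_congr rfl fun i hi => ?_
          rw [norm_mul, Complex.norm_real, Real.norm_of_nonneg (hr0 i hi)]
      _ = ∑ i ∈ s, ‖(Lagrange.basis s v i).eval w‖ := by
          refine sum_congr rfl fun i hi => ?_
          rw [← hr i hi, norm_mul, hq1 i hi, one_mul]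
  calc ‖p.eval w‖ ≤ ∑ i ∈ s, ‖p.eval (v i) * (Lagrange.basis s v i).eval w‖ :=
        (eval_eq p hp).symm ▸ norm_sum_le _ _
    _ ≤ ∑ i ∈ s, ‖(Lagrange.basis s v i).eval w‖ := by
        refine sum_le_sum fun i hi => ?_
        rw [norm_mul]
        exact mul_le_of_le_one_left (norm_nonneg _) (hp1 i hi)
    _ = ‖q.eval w‖ := hq_norm.symm

theorem neg_one_pow_mul_prod_erase_sub_pos {x : ℕ → ℝ} {n : ℕ}
    (hx : StrictAntiOn x (Set.Iic n)) {k : ℕ} (hk : k ≤ n) :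
    0 < (-1) ^ k * ∏ j ∈ (range (n + 1)).erase k, (x k - x j) := by
  have hsplit : (range (n + 1)).erase k = range k ∪ Ico (k + 1) (n + 1) := by
    ext j; simp only [mem_erase, mem_range, mem_union, mem_Ico]; omega
  have hdisj : Disjoint (range k) (Ico (k + 1) (n + 1)) := by
    rw [disjoint_left]; intro j hj hj'; simp only [mem_range, mem_Ico] at hj hj'; omega
  have hlow : (-1) ^ k * ∏ j ∈ range k, (x k - x j) = ∏ j ∈ range k, (x j - x k) := by
    rw [← card_range k, ← prod_const, card_range, ← prod_mul_distrib]
    exact prod_congr rfl fun j _ => by ring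
  rw [hsplit, prod_union hdisj, ← mul_assoc, hlow]
  refine mul_pos (prod_pos fun j hj => ?_) (prod_pos fun j hj => ?_)
  · simp only [mem_range] at hj
    exact sub_pos.2 (hx (by simp only [Set.mem_Iic]; omega) (by simpa using hk) hj)
  · simp only [mem_Ico] at hj
    exact sub_pos.2 (hx (by simpa using hk) (by simp only [Set.mem_Iic]; omega) (by omega))

theorem norm_eval_le_of_alternating {n : ℕ} {x : ℕ → ℝ} (hx : StrictAntiOn x (Set.Iic n))
    {p q : ℂ[X]} (hp : p.degree ≤ n) (hq : q.degree ≤ n) {w c : ℂ}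
    (hqx : ∀ k ≤ n, ∃ ρ : ℝ, 0 ≤ ρ ∧ q.eval (x k : ℂ) = (-1) ^ k * ρ * c * (w - x k))
    (hq1 : ∀ k ≤ n, ‖q.eval (x k : ℂ)‖ = 1) (hp1 : ∀ k ≤ n, ‖p.eval (x k : ℂ)‖ ≤ 1) :
    ‖p.eval w‖ ≤ ‖q.eval w‖ := by
  have hmem {k : ℕ} : k ∈ range (n + 1) ↔ k ≤ n := by simp
  have hdeg {f : ℂ[X]} (hf : f.degree ≤ n) : f.degree < #(range (n + 1)) :=
    hf.trans_lt (by rw [card_range]; exact_mod_cast n.lt_succ_self)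
  have hinj : Set.InjOn (fun k => (x k : ℂ)) (range (n + 1)) := fun i hi j hj hij =>
    hx.injOn (by simpa using hmem.1 hi) (by simpa using hmem.1 hj) (Complex.ofReal_injective hij)
  refine Lagrange.norm_eval_le_of_aligned hinj (hdeg hp) (hdeg hq)
    (c := c * (Lagrange.nodal (range (n + 1)) fun k => (x k : ℂ)).eval w) (fun k hk => ?_)
    (fun k hk => hq1 k (hmem.1 hk)) (fun k hk => hp1 k (hmem.1 hk))
  obtain ⟨ρ, hρ, hqk⟩ := hqx k (hmem.1 hk)
  have hwk : w ≠ x k := by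
    rintro rfl
    simpa [hqk] using hq1 k (hmem.1 hk)
  set D := ∏ j ∈ (range (n + 1)).erase k, (x k - x j)
  have hD := neg_one_pow_mul_prod_erase_sub_pos hx (hmem.1 hk)
  refine ⟨ρ * ((-1) ^ k * D)⁻¹, mul_nonneg hρ (inv_nonneg.2 hD.le), ?_⟩
  have hweight :
      Lagrange.nodalWeight (range (n + 1)) (fun k => (x k : ℂ)) k = ((D : ℝ) : ℂ)⁻¹ := by
    simp [Lagrange.nodalWeight, D, prod_inv_distrib]
  rw [Lagrange.eval_basis_not_at_node hk hwk, hweight, hqk]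
  have hwk' : w - x k ≠ 0 := sub_ne_zero.2 hwk
  have hD' : (D : ℂ) ≠ 0 := by exact_mod_cast right_ne_zero_of_mul hD.ne'
  push_cast
  field_simp
  rw [← pow_mul, pow_mul', neg_one_sq, one_pow]
  ring

theorem exists_strictMonoOn_preimage_Icc {f : ℝ → ℝ} {a b : ℝ} (hab : a ≤ b)
    (hf : ContinuousOn f (Set.Icc a b)) {y : ℕ → ℝ} (hy : StrictMono y) {n : ℕ}
    (ha : f a ≤ y 0) (hb : y n ≤ f b) :
    ∃ θ : ℕ → ℝ, StrictMonoOn θ (Set.Iic n) ∧ ∀ k ≤ n, θ k ∈ Set.Icc a b ∧ f (θ k) = y k := by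
  let S (k : ℕ) : Set ℝ := Set.Icc a b ∩ f ⁻¹' {y k}
  have hS {k : ℕ} (hk : k ≤ n) : (S k).Nonempty :=
    intermediate_value_Icc hab hf ⟨ha.trans (hy.monotone k.zero_le), (hy.monotone hk).trans hb⟩
  have hmem {k : ℕ} (hk : k ≤ n) : sInf (S k) ∈ S k :=
    (hf.preimage_isClosed_of_isClosed isClosed_Icc isClosed_singleton).csInf_mem (hS hk)
      ⟨a, fun _ h => h.1.1⟩
  refine ⟨fun k => sInf (S k), fun k hk l hl hkl => ?_, fun k hk => hmem hk⟩
  obtain ⟨⟨hal, hlb⟩, hfl⟩ := hmem hl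
  have hyk : y k ∈ Set.Icc (f a) (f (sInf (S l))) :=
    ⟨ha.trans (hy.monotone k.zero_le), (hy hkl).le.trans_eq hfl.symm⟩
  obtain ⟨θ', hθ', hfθ'⟩ :=
    intermediate_value_Icc hal (hf.mono (Set.Icc_subset_Icc_right hlb)) hyk
  have hθ'S : θ' ∈ S k := ⟨⟨hθ'.1, hθ'.2.trans hlb⟩, hfθ'⟩
  refine (csInf_le ⟨a, fun _ h => h.1.1⟩ hθ'S).trans_lt (hθ'.2.lt_of_ne ?_)
  rintro rfl
  exact (hy hkl).ne (hfθ'.symm.trans hfl)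

theorem two_re_mul_self_of_norm_eq_one {u : ℂ} (hu : ‖u‖ = 1) :
    2 * (u.re : ℂ) * u = u ^ 2 + 1 := by
  rw [re_eq_add_conj, mul_div_cancel₀ _ two_ne_zero, add_mul, conj_mul', hu]
  push_cast
  ring

theorem re_sq_add_im_sq_of_norm_eq_one {u : ℂ} (hu : ‖u‖ = 1) : u.re ^ 2 + u.im ^ 2 = 1 := by
  linear_combination -(sq_norm_sub_sq_re u) + (‖u‖ + 1) * hu

theorem sq_norm_mul_add_I_add_sq_norm_add_I_mul (t : ℝ) {u : ℂ} (hu : ‖u‖ = 1) :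
    ‖t * u + I‖ ^ 2 + ‖t + I * u‖ ^ 2 = 2 * (t ^ 2 + 1) := by
  simp only [Complex.sq_norm, normSq_apply, add_re, mul_re, ofReal_re, ofReal_im, I_re, I_im,
    add_im, mul_im, zero_mul, sub_zero, add_zero, zero_add, one_mul, zero_sub]
  linear_combination (t ^ 2 + 1) * re_sq_add_im_sq_of_norm_eq_one hu

theorem sq_norm_sq_add_sq (t : ℝ) {u : ℂ} (hu : ‖u‖ = 1) :
    ‖(t : ℂ) ^ 2 + u ^ 2‖ ^ 2 = (t ^ 2 - 1) ^ 2 + 4 * t ^ 2 * u.re ^ 2 := by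
  rw [Complex.sq_norm, normSq_apply]
  simp only [sq, add_re, mul_re, ofReal_re, ofReal_im, add_im, mul_im, mul_zero, zero_mul,
    sub_zero, add_zero, zero_add]
  linear_combination (u.re ^ 2 + u.im ^ 2 + 1 - 2 * t ^ 2) * re_sq_add_im_sq_of_norm_eq_one hu

theorem sq_norm_mul_I_sub_ofReal (a x : ℝ) : ‖(a : ℂ) * I - x‖ ^ 2 = a ^ 2 + x ^ 2 := by
  simp only [Complex.sq_norm, normSq_apply, sub_re, sub_im, mul_re, mul_im, ofReal_re, ofReal_im,
    I_re, I_im]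
  ring

namespace ExtremalGrowth

noncomputable def s (a : ℝ) : ℝ := √(a ^ 2 + 1)

noncomputable def t (a : ℝ) : ℝ := a + s a

variable (a : ℝ)

theorem s_sq : s a ^ 2 = a ^ 2 + 1 := Real.sq_sqrt (by positivity)

theorem s_pos : 0 < s a := Real.sqrt_pos.2 (by positivity)

theorem t_pos : 0 < t a := by
  nlinarith [s_sq a, s_pos a, show t a = a + s a from rfl]

theorem t_sq : t a ^ 2 = 2 * a * t a + 1 := by
  simp only [t]; linear_combination s_sq a

theorem two_mul_s_mul_t : 2 * s a * t a = t a ^ 2 + 1 := by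
  simp only [t]; linear_combination s_sq a

theorem one_lt_t {a : ℝ} (ha : 0 < a) : 1 < t a := by
  nlinarith [t_sq a, t_pos a]

/-- `extremalPoly a m` is the polynomial `Q_{m+1}`. -/
noncomputable def extremalPoly : ℕ → ℂ[X]
  | 0 => -C (s a : ℂ)⁻¹ * (C (a : ℂ) * X + C I)
  | 1 => C (s a : ℂ)⁻¹ * (-C (t a : ℂ) * X ^ 2 - C I * X + C (s a : ℂ))
  | m + 2 => 2 * X * extremalPoly (m + 1) - extremalPoly m

theorem natDegree_extremalPoly_le : ∀ m, (extremalPoly a m).natDegree ≤ m + 1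
  | 0 => by rw [extremalPoly]; compute_degree
  | 1 => by rw [extremalPoly]; compute_degree
  | m + 2 => by
    rw [extremalPoly]
    have h2X : (2 * X : ℂ[X]).natDegree ≤ 1 := by compute_degree
    refine (natDegree_sub_le_of_le (natDegree_mul_le_of_le h2X (natDegree_extremalPoly_le (m + 1)))
      (natDegree_extremalPoly_le m)).trans ?_
    omega

theorem eval_extremalPoly_eq (Q : ℕ → ℂ → ℂ)
    (hQ1 : ∀ z : ℂ, Q 1 z = -((a : ℂ) * z + I) / (√(a ^ 2 + 1) : ℂ))
    (hQ2 : ∀ z : ℂ, Q 2 z =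
      (-(((a : ℂ) + (√(a ^ 2 + 1) : ℂ))) * z ^ 2 - I * z + (√(a ^ 2 + 1) : ℂ)) /
        (√(a ^ 2 + 1) : ℂ))
    (hrec : ∀ m : ℕ, 2 ≤ m → ∀ z : ℂ, Q (m + 1) z = 2 * z * Q m z - Q (m - 1) z) :
    ∀ m z, (extremalPoly a m).eval z = Q (m + 1) z
  | 0, z => by
    rw [hQ1, extremalPoly]
    simp only [eval_mul, eval_neg, eval_add, eval_C, eval_X, s]
    ring
  | 1, z => by
    rw [hQ2, extremalPoly]
    simp only [eval_mul, eval_neg, eval_add, eval_sub, eval_C, eval_X, eval_pow, s, t, ofReal_add]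
    ring
  | m + 2, z => by
    rw [hrec (m + 2) (by omega), extremalPoly]
    simp [eval_extremalPoly_eq Q hQ1 hQ2 hrec (m + 1), eval_extremalPoly_eq Q hQ1 hQ2 hrec m]

theorem t_sq_complex : (t a : ℂ) ^ 2 = 2 * a * t a + 1 := by exact_mod_cast t_sq a

theorem two_mul_s_mul_t_complex : 2 * (s a : ℂ) * t a = (t a : ℂ) ^ 2 + 1 := by
  exact_mod_cast two_mul_s_mul_t a

theorem extremalPoly_joukowski {z u : ℂ} (hzu : 2 * z * u = u ^ 2 + 1) :
    ∀ m, 4 * s a * t a * u ^ (m + 1) * (extremalPoly a m).eval z =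
      -((t a * u + I) ^ 2 * u ^ (2 * m) + (t a + I * u) ^ 2)
  | 0 => by
    have hs : (s a : ℂ) ≠ 0 := by exact_mod_cast (s_pos a).ne'
    simp only [extremalPoly, eval_mul, eval_neg, eval_add, eval_C, eval_X]
    field_simp
    linear_combination
      (-2 * a * t a : ℂ) * hzu + (u ^ 2 + 1) * t_sq_complex a + (u ^ 2 + 1) * I_sq
  | 1 => by
    have hs : (s a : ℂ) ≠ 0 := by exact_mod_cast (s_pos a).ne'
    simp only [extremalPoly, eval_mul, eval_neg, eval_add, eval_sub, eval_C, eval_X, eval_pow]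
    field_simp
    linear_combination (-(t a : ℂ) ^ 2 * (2 * z * u + u ^ 2 + 1) - 2 * I * t a * u) * hzu +
      2 * u ^ 2 * two_mul_s_mul_t_complex a + 2 * u ^ 2 * I_sq
  | m + 2 => by
    have h1 := extremalPoly_joukowski hzu (m + 1)
    have h0 := extremalPoly_joukowski hzu m
    simp only [extremalPoly, eval_mul, eval_sub, eval_X, eval_ofNat]
    linear_combination (2 * z * u) * h1 - u ^ 2 * h0 -
      ((t a * u + I) ^ 2 * u ^ (2 * m + 2) + (t a + I * u) ^ 2) * hzu

theorem eval_extremalPoly_mul_I (m : ℕ) :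
    (extremalPoly a m).eval (a * I) = -I * s a * (t a * I) ^ m := by
  have hs : (s a : ℂ) ≠ 0 := by exact_mod_cast (s_pos a).ne'
  have ht : (t a : ℂ) ≠ 0 := by exact_mod_cast (t_pos a).ne'
  have hzu : 2 * (a * I) * (t a * I) = (t a * I) ^ 2 + 1 := by
    linear_combination (-(t a : ℂ) ^ 2 + 2 * a * t a) * I_sq + t_sq_complex a
  have h := extremalPoly_joukowski a hzu m
  have hne : 4 * (s a : ℂ) * t a * (t a * I) ^ (m + 1) ≠ 0 := by simp [hs, ht, I_ne_zero]
  refine mul_left_cancel₀ hne ?_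
  linear_combination h + (t a * I : ℂ) ^ (2 * m) * I ^ 2 * (2 * s a * t a + t a ^ 2 + 1) *
    two_mul_s_mul_t_complex a - (t a : ℂ) ^ 2 * (I ^ 2 + 1) * I_sq

theorem norm_eval_extremalPoly_mul_I (m : ℕ) :
    ‖(extremalPoly a m).eval (a * I)‖ = s a * t a ^ m := by
  simp [eval_extremalPoly_mul_I, abs_of_pos (s_pos a), abs_of_pos (t_pos a)]

theorem norm_eval_extremalPoly_le_one (m : ℕ) {x : ℝ} (hx : x ∈ Set.Icc (-1) 1) :
    ‖(extremalPoly a m).eval (x : ℂ)‖ ≤ 1 := by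
  set u := exp (Real.arccos x * I)
  have hu : ‖u‖ = 1 := norm_exp_ofReal_mul_I _
  have hux : u.re = x := by rw [exp_ofReal_mul_I_re, Real.cos_arccos hx.1 hx.2]
  have h := extremalPoly_joukowski a (hux ▸ two_re_mul_self_of_norm_eq_one hu) m
  have hst := two_mul_s_mul_t a
  have hpos : 0 < 4 * s a * t a := by have := s_pos a; have := t_pos a; positivity
  refine le_of_mul_le_mul_left ?_ hpos
  calc 4 * s a * t a * ‖(extremalPoly a m).eval (x : ℂ)‖
      = ‖(t a * u + I) ^ 2 * u ^ (2 * m) + (t a + I * u) ^ 2‖ := by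
        rw [← norm_neg (_ + _), ← h]
        simp [hu, abs_of_pos (s_pos a), abs_of_pos (t_pos a)]
    _ ≤ ‖(t a : ℂ) * u + I‖ ^ 2 + ‖(t a : ℂ) + I * u‖ ^ 2 := by
        refine (norm_add_le _ _).trans_eq ?_
        simp [hu]
    _ = 4 * s a * t a * 1 := by
        rw [sq_norm_mul_add_I_add_sq_norm_add_I_mul _ hu]; linarith

/-- For `|u| = 1` and `z = Re u`, `hr` says `r = |t² + u²|`. -/
theorem mul_eval_extremalPoly_of_phase (m : ℕ) {z u r ε : ℂ} (hzu : 2 * z * u = u ^ 2 + 1)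
    (hr : r ^ 2 = 4 * t a ^ 2 * (a ^ 2 + z ^ 2)) (hε : ε ^ 2 = 1) (hr0 : r ≠ 0)
    (hphase : r * u ^ (m + 1) = ε * (t a ^ 2 + u ^ 2)) :
    r * (extremalPoly a m).eval z = 2 * t a * ε * I * (a * I - z) := by
  set c : ℂ := t a ^ 2 + u ^ 2 with hc_def
  set P := (extremalPoly a m).eval z
  have hu : u ≠ 0 := by rintro rfl; simp at hzu
  have hc : c ≠ 0 := by
    rintro hc; rw [hc, mul_zero] at hphase; simp [hr0, hu] at hphase
  have hts := t_sq_complex a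
  have hrc : r ^ 2 * u ^ 2 = c * (t a ^ 2 * u ^ 2 + 1) := by
    linear_combination u ^ 2 * hr - u ^ 2 * (t a ^ 2 - 1 + 2 * a * t a) * hts +
      t a ^ 2 * (2 * z * u + u ^ 2 + 1) * hzu
  have hU : u ^ (2 * m) * (t a ^ 2 * u ^ 2 + 1) = c := by
    refine mul_left_cancel₀ hc ?_
    linear_combination -u ^ (2 * m) * hrc + (r * u ^ (m + 1) + ε * c) * hphase + c ^ 2 * hε
  have hc' : c = ε * r * u ^ (m + 1) := by linear_combination -ε * hphase - c * hε
  set X := (t a * u + I) ^ 2 * u ^ (2 * m) + (t a + I * u) ^ 2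
  have hJ : 4 * s a * t a * u ^ (m + 1) * P = -X := extremalPoly_joukowski a hzu m
  have h2 : 4 * s a * t a * c * u ^ 2 * (ε * r * P) = -(c * (t a ^ 2 * u ^ 2 + 1) * X) := by
    linear_combination 4 * s a * t a * u ^ 2 * ε * r * P * hc' +
      r ^ 2 * u ^ 2 * 4 * s a * t a * u ^ (m + 1) * P * hε + r ^ 2 * u ^ 2 * hJ - X * hrc
  have hfac : (t a * u + I) ^ 2 * c + (t a + I * u) ^ 2 * (t a ^ 2 * u ^ 2 + 1) =
      2 * (t a ^ 2 + 1) * u * ((t a * u + I) * (t a + I * u)) := by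
    linear_combination (t a : ℂ) ^ 2 * (u ^ 2 - 1) ^ 2 * I_sq + (t a * u + I) ^ 2 * hc_def
  have hAB : (t a * u + I) * (t a + I * u) = 2 * t a * u * (a + I * z) := by
    linear_combination u * I_sq + u * hts - t a * I * hzu
  have key : 4 * s a * t a * c * u ^ 2 * (ε * r * P + 2 * t a * (a + I * z)) = 0 := by
    linear_combination h2 - c * (t a * u + I) ^ 2 * hU - c * hfac -
      2 * c * (t a ^ 2 + 1) * u * hAB + 4 * c * t a * u ^ 2 * (a + I * z) * two_mul_s_mul_t_complex a
  have hne : 4 * (s a : ℂ) * t a * c * u ^ 2 ≠ 0 := by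
    simp [hc, hu, (s_pos a).ne', (t_pos a).ne']
  have h := (mul_eq_zero.1 key).resolve_left hne
  linear_combination ε * h - r * P * hε - 2 * t a * ε * a * I_sq

noncomputable def phase (n : ℕ) (θ : ℝ) : ℝ := n * θ - arg ((t a : ℂ) ^ 2 + exp (θ * I) ^ 2)

theorem continuous_phase {a : ℝ} (ha : 0 < a) (n : ℕ) : Continuous (phase a n) := by
  have hslit (θ : ℝ) : (t a : ℂ) ^ 2 + exp (θ * I) ^ 2 ∈ slitPlane := by
    refine mem_slitPlane_iff.2 (Or.inl ?_)
    have hre := neg_abs_le (exp (θ * I) ^ 2).re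
    have hnorm := abs_re_le_norm (exp (θ * I) ^ 2)
    rw [norm_pow, norm_exp_ofReal_mul_I, one_pow] at hnorm
    have := one_lt_t ha
    simp only [add_re, ← ofReal_pow, ofReal_re]
    nlinarith
  refine continuous_const.mul continuous_id |>.sub <| continuous_iff_continuousAt.2 fun θ => ?_
  exact (continuousAt_arg (hslit θ)).comp (f := fun θ : ℝ => (t a : ℂ) ^ 2 + exp (θ * I) ^ 2)
    (by fun_prop)

theorem arg_t_sq_add_one : arg ((t a : ℂ) ^ 2 + 1) = 0 := by
  exact_mod_cast arg_ofReal_of_nonneg (by positivity : 0 ≤ t a ^ 2 + 1)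

theorem phase_zero (n : ℕ) : phase a n 0 = 0 := by
  simp [phase, arg_t_sq_add_one]

theorem phase_pi (n : ℕ) : phase a n π = n * π := by
  simp [phase, exp_pi_mul_I, arg_t_sq_add_one]

theorem norm_mul_exp_pow_of_phase_eq {n k : ℕ} {θ : ℝ} (hθ : phase a n θ = k * π) :
    ‖(t a : ℂ) ^ 2 + exp (θ * I) ^ 2‖ * exp (θ * I) ^ n =
      (-1) ^ k * ((t a : ℂ) ^ 2 + exp (θ * I) ^ 2) := by
  set c := (t a : ℂ) ^ 2 + exp (θ * I) ^ 2
  have hnθ : (n * θ : ℂ) * I = k * (π * I) + arg c * I := by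
    have : (n * θ : ℝ) = k * π + arg c := by simp only [phase] at hθ; linarith
    exact_mod_cast congrArg (fun x : ℝ => (x : ℂ) * I) this |>.trans (by push_cast; ring)
  rw [← exp_nat_mul, ← mul_assoc, hnθ, exp_add, exp_nat_mul, exp_pi_mul_I]
  linear_combination (-1 : ℂ) ^ k * norm_mul_exp_arg_mul_I c

theorem eval_extremalPoly_of_phase_eq {a : ℝ} (ha : 0 < a) (m k : ℕ) {θ : ℝ}
    (hθ : phase a (m + 1) θ = k * π) :
    ‖(extremalPoly a m).eval (Real.cos θ : ℂ)‖ = 1 ∧ ∃ ρ : ℝ, 0 ≤ ρ ∧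
      (extremalPoly a m).eval (Real.cos θ : ℂ) = (-1) ^ k * ρ * I * (a * I - Real.cos θ) := by
  set u := exp (θ * I)
  set x := Real.cos θ
  set r := ‖(t a : ℂ) ^ 2 + u ^ 2‖
  have hu : ‖u‖ = 1 := norm_exp_ofReal_mul_I θ
  have hux : u.re = x := exp_ofReal_mul_I_re θ
  have hzu : 2 * (x : ℂ) * u = u ^ 2 + 1 := hux ▸ two_re_mul_self_of_norm_eq_one hu
  have hr : r ^ 2 = 4 * t a ^ 2 * (a ^ 2 + x ^ 2) := by
    rw [sq_norm_sq_add_sq _ hu, hux]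
    linear_combination (t a ^ 2 - 1 + 2 * a * t a) * t_sq a
  have hr_pos : 0 < r := by
    have : 0 < r ^ 2 := by have := t_pos a; rw [hr]; positivity
    nlinarith [norm_nonneg ((t a : ℂ) ^ 2 + u ^ 2)]
  have hε : ((-1 : ℂ) ^ k) ^ 2 = 1 := by rw [← pow_mul, pow_mul', neg_one_sq, one_pow]
  have key := mul_eval_extremalPoly_of_phase a m hzu (r := r) (by exact_mod_cast hr) hε
    (by exact_mod_cast hr_pos.ne') (norm_mul_exp_pow_of_phase_eq a hθ)
  have hP :
      (extremalPoly a m).eval (x : ℂ) = (-1) ^ k * (2 * t a / r : ℝ) * I * (a * I - x) := by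
    have : (r : ℂ) ≠ 0 := by exact_mod_cast hr_pos.ne'
    push_cast
    field_simp
    linear_combination key
  refine ⟨?_, _, by have := t_pos a; positivity, hP⟩
  have hr' : r = 2 * t a * ‖(a : ℂ) * I - x‖ := by
    have := t_pos a
    refine (pow_left_inj₀ hr_pos.le (by positivity) two_ne_zero).1 ?_
    rw [hr, mul_pow, sq_norm_mul_I_sub_ofReal]; ring
  rw [hP]
  simp only [norm_mul, norm_pow, norm_neg, norm_one, one_pow, norm_I, Complex.norm_real,
    Real.norm_eq_abs, abs_of_pos (div_pos (mul_pos two_pos (t_pos a)) hr_pos)]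
  field_simp
  linarith

theorem exists_alternation_nodes {a : ℝ} (ha : 0 < a) (m : ℕ) :
    ∃ x : ℕ → ℝ, StrictAntiOn x (Set.Iic (m + 1)) ∧ ∀ k ≤ m + 1, x k ∈ Set.Icc (-1) 1 ∧
      ‖(extremalPoly a m).eval (x k : ℂ)‖ = 1 ∧ ∃ ρ : ℝ, 0 ≤ ρ ∧
        (extremalPoly a m).eval (x k : ℂ) = (-1) ^ k * ρ * I * (a * I - x k) := by
  obtain ⟨θ, hmono, hθ⟩ := exists_strictMonoOn_preimage_Icc Real.pi_pos.le
    (continuous_phase ha (m + 1)).continuousOn (y := fun k : ℕ => k * π) (n := m + 1)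
    (StrictMono.mul_const Nat.strictMono_cast Real.pi_pos) (by simp [phase_zero])
    (by simp [phase_pi])
  refine ⟨fun k => Real.cos (θ k), fun k hk l hl hkl =>
    Real.strictAntiOn_cos (hθ k hk).1 (hθ l hl).1 (hmono hk hl hkl), fun k hk =>
    ⟨⟨Real.neg_one_le_cos _, Real.cos_le_one _⟩,
      eval_extremalPoly_of_phase_eq ha m k (hθ k hk).2⟩⟩

end ExtremalGrowth

open ExtremalGrowth in
/-- The extremal growth at `ai` over complex polynomials of degree at most `n` bounded by
`1` on `[-1,1]` is `√(a²+1)(a+√(a²+1))^{n-1}`, attained by the polynomial `Q_n`. -/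
theorem stmt18 (a : ℝ) (ha : 0 < a) (n : ℕ) (hn : 1 ≤ n) (Q : ℕ → ℂ → ℂ)
    (hQ1 : ∀ z : ℂ, Q 1 z = -((a : ℂ) * z + Complex.I) / (Real.sqrt (a ^ 2 + 1) : ℂ))
    (hQ2 : ∀ z : ℂ, Q 2 z =
      (-(((a : ℂ) + (Real.sqrt (a ^ 2 + 1) : ℂ))) * z ^ 2 - Complex.I * z +
        (Real.sqrt (a ^ 2 + 1) : ℂ)) / (Real.sqrt (a ^ 2 + 1) : ℂ))
    (hrec : ∀ m : ℕ, 2 ≤ m → ∀ z : ℂ, Q (m + 1) z = 2 * z * Q m z - Q (m - 1) z) :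
    IsGreatest {y : ℝ | ∃ p : Polynomial ℂ, p.degree ≤ n ∧
        (∀ x : ℝ, x ∈ Set.Icc (-1 : ℝ) 1 → ‖p.eval (x : ℂ)‖ ≤ 1) ∧
        y = ‖p.eval ((a : ℂ) * Complex.I)‖}
      (Real.sqrt (a ^ 2 + 1) * (a + Real.sqrt (a ^ 2 + 1)) ^ (n - 1)) ∧
    (∃ p : Polynomial ℂ, p.degree ≤ n ∧ (∀ z : ℂ, p.eval z = Q n z) ∧
      (∀ x : ℝ, x ∈ Set.Icc (-1 : ℝ) 1 → ‖p.eval (x : ℂ)‖ ≤ 1) ∧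
      ‖p.eval ((a : ℂ) * Complex.I)‖ =
        Real.sqrt (a ^ 2 + 1) * (a + Real.sqrt (a ^ 2 + 1)) ^ (n - 1)) := by
  obtain ⟨m, rfl⟩ : ∃ m, n = m + 1 := ⟨n - 1, by omega⟩
  have hvalue : Real.sqrt (a ^ 2 + 1) * (a + Real.sqrt (a ^ 2 + 1)) ^ (m + 1 - 1) =
      ‖(extremalPoly a m).eval ((a : ℂ) * Complex.I)‖ := by
    rw [norm_eval_extremalPoly_mul_I, Nat.add_sub_cancel]; rfl
  have hdeg : (extremalPoly a m).degree ≤ (m + 1 : ℕ) :=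
    degree_le_of_natDegree_le (natDegree_extremalPoly_le a m)
  have hbound := fun x (hx : x ∈ Set.Icc (-1 : ℝ) 1) => norm_eval_extremalPoly_le_one a m hx
  rw [hvalue]
  refine ⟨⟨⟨_, hdeg, hbound, rfl⟩, ?_⟩,
    _, hdeg, eval_extremalPoly_eq a Q hQ1 hQ2 hrec m, hbound, rfl⟩
  rintro y ⟨p, hp, hp1, rfl⟩
  obtain ⟨x, hx, hnode⟩ := exists_alternation_nodes ha m
  exact norm_eval_le_of_alternating hx hp hdeg (fun k hk => (hnode k hk).2.2)
    (fun k hk => (hnode k hk).2.1) (fun k hk => hp1 _ (hnode k hk).1)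
end

section
/- Suppose x_k in (-1,1) is a zero of R_{n-1}(x) = (1/sqrt(a^2+1))( sqrt(a^2+1) x U_{n-2}(x) + a T_{n-1}(x) ) with a > 0 and n >= 2. Then Q_n(x_k) = ((a + i x_k)/a) * U_{n-2}(x_k), and moreover |Q_n(x_k)| = 1, so that U_{n-2}(x_k)^2 = a^2/(a^2 + x_k^2), where Q_n(z) = (1/sqrt(a^2+1))( -(az+i) T_{n-1}(z) + sqrt(a^2+1)(1-z^2) U_{n-2}(z) ). -/
/-!
Write `T = T_{n-1}(x_k)`, `U = U_{n-2}(x_k)`, `s = √(a²+1)`. The zero condition says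
`a T = -s x_k U`; substituting it into `Q_n` collapses `Q_n(x_k)` to `((a + i x_k)/a) U`.
Combined with the Pell identity `T² + (1 - x²) U² = 1` it gives `(a² + x_k²) U² = a²`,
which is exactly `|Q_n(x_k)| = 1`.
-/

open Polynomial

namespace Polynomial.Chebyshev

variable (R : Type*) [CommRing R]

theorem T_add_one_sq_add_one_sub_X_sq_mul_U_sq (n : ℤ) :
    T R (n + 1) ^ 2 + (1 - X ^ 2) * U R n ^ 2 = 1 := by
  have h := congr_arg (·.comp (2 * X)) (S_sq_add_S_sq R n)
  simp only [sub_comp, add_comp, mul_comp, pow_comp, X_comp, one_comp, S_comp_two_mul_X] at h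
  rw [T_eq_U_sub_X_mul_U, add_sub_cancel_right]
  linear_combination h

end Polynomial.Chebyshev

open Polynomial.Chebyshev

theorem mul_eq_of_mul_add_mul_eq_zero {K : Type*} [Field K] {a s x t u : K} (i : K)
    (ha : a ≠ 0) (hs : s ≠ 0) (h : s * x * u + a * t = 0) :
    1 / s * (-(a * x + i) * t + s * (1 - x ^ 2) * u) = (a + i * x) / a * u := by
  field_simp
  linear_combination (-x * a - i) * h

theorem sq_eq_div_of_mul_add_mul_eq_zero {K : Type*} [Field K] {a s x t u : K}
    (hax : a ^ 2 + x ^ 2 ≠ 0) (hs : s ^ 2 = a ^ 2 + 1) (h : s * x * u + a * t = 0)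
    (hpell : t ^ 2 + (1 - x ^ 2) * u ^ 2 = 1) :
    u ^ 2 = a ^ 2 / (a ^ 2 + x ^ 2) := by
  rw [eq_div_iff hax]
  linear_combination a ^ 2 * hpell - (a * t - s * x * u) * h - x ^ 2 * u ^ 2 * hs

theorem Complex.norm_add_I_mul_div_mul_eq_one {a x u : ℝ} (ha : a ≠ 0)
    (hu : u ^ 2 = a ^ 2 / (a ^ 2 + x ^ 2)) :
    ‖((a : ℂ) + Complex.I * x) / a * u‖ = 1 := by
  have hax : a ^ 2 + x ^ 2 ≠ 0 := by positivity
  rw [eq_div_iff hax] at hu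
  rw [← pow_eq_one_iff_of_nonneg (norm_nonneg _) two_ne_zero, Complex.sq_norm, map_mul, map_div₀,
    Complex.normSq_ofReal, Complex.normSq_ofReal, mul_comm Complex.I, Complex.normSq_add_mul_I]
  field_simp
  linear_combination hu

theorem stmt19_general (a : ℝ) (ha : 0 < a) (n : ℕ) (xk : ℝ)
    (hzero : (1 / Real.sqrt (a ^ 2 + 1)) *
        (Real.sqrt (a ^ 2 + 1) * xk * (Polynomial.Chebyshev.U ℝ ((n : ℤ) - 2)).eval xk +
          a * (Polynomial.Chebyshev.T ℝ ((n : ℤ) - 1)).eval xk) = 0) :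
    (1 / (Real.sqrt (a ^ 2 + 1) : ℂ)) *
        (-((a : ℂ) * (xk : ℂ) + Complex.I) *
            (Polynomial.Chebyshev.T ℂ ((n : ℤ) - 1)).eval (xk : ℂ) +
          (Real.sqrt (a ^ 2 + 1) : ℂ) * (1 - (xk : ℂ) ^ 2) *
            (Polynomial.Chebyshev.U ℂ ((n : ℤ) - 2)).eval (xk : ℂ)) =
      (((a : ℂ) + Complex.I * (xk : ℂ)) / (a : ℂ)) *
        (Polynomial.Chebyshev.U ℂ ((n : ℤ) - 2)).eval (xk : ℂ) ∧
    ‖((1 / (Real.sqrt (a ^ 2 + 1) : ℂ)) *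
        (-((a : ℂ) * (xk : ℂ) + Complex.I) *
            (Polynomial.Chebyshev.T ℂ ((n : ℤ) - 1)).eval (xk : ℂ) +
          (Real.sqrt (a ^ 2 + 1) : ℂ) * (1 - (xk : ℂ) ^ 2) *
            (Polynomial.Chebyshev.U ℂ ((n : ℤ) - 2)).eval (xk : ℂ)))‖ = 1 ∧
    ((Polynomial.Chebyshev.U ℝ ((n : ℤ) - 2)).eval xk) ^ 2 = a ^ 2 / (a ^ 2 + xk ^ 2) := by
  set s := Real.sqrt (a ^ 2 + 1)
  have hs : s ^ 2 = a ^ 2 + 1 := Real.sq_sqrt (by positivity)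
  have hs0 : s ≠ 0 := (Real.sqrt_pos.mpr (by positivity)).ne'
  have hR : s * xk * (U ℝ (n - 2)).eval xk + a * (T ℝ (n - 1)).eval xk = 0 :=
    (mul_eq_zero.mp hzero).resolve_left (one_div_ne_zero hs0)
  have hpell : (T ℝ (n - 1)).eval xk ^ 2 + (1 - xk ^ 2) * (U ℝ (n - 2)).eval xk ^ 2 = 1 := by
    simpa only [show (n : ℤ) - 2 + 1 = n - 1 by ring, eval_add, eval_mul, eval_pow, eval_sub,
      eval_one, eval_X] using
      congr_arg (eval xk) (T_add_one_sq_add_one_sub_X_sq_mul_U_sq ℝ (n - 2))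
  have hU := sq_eq_div_of_mul_add_mul_eq_zero (by positivity) hs hR hpell
  have hRC := congr_arg Complex.ofReal hR
  simp only [Complex.ofReal_add, Complex.ofReal_mul, Complex.ofReal_zero] at hRC
  have hQ := mul_eq_of_mul_add_mul_eq_zero Complex.I (Complex.ofReal_ne_zero.mpr ha.ne')
    (Complex.ofReal_ne_zero.mpr hs0) hRC
  rw [← complex_ofReal_eval_T, ← complex_ofReal_eval_U, hQ]
  exact ⟨rfl, Complex.norm_add_I_mul_div_mul_eq_one ha.ne' hU, hU⟩

/-- At a zero `x_k ∈ (-1,1)` of `R_{n-1}`, the polynomial `Q_n` takes the value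
`((a + i x_k)/a) U_{n-2}(x_k)`, has modulus `1`, and `U_{n-2}(x_k)² = a²/(a² + x_k²)`. -/
theorem stmt19 (a : ℝ) (ha : 0 < a) (n : ℕ) (hn : 2 ≤ n) (xk : ℝ)
    (hxk : xk ∈ Set.Ioo (-1 : ℝ) 1)
    (hzero : (1 / Real.sqrt (a ^ 2 + 1)) *
        (Real.sqrt (a ^ 2 + 1) * xk * (Polynomial.Chebyshev.U ℝ ((n : ℤ) - 2)).eval xk +
          a * (Polynomial.Chebyshev.T ℝ ((n : ℤ) - 1)).eval xk) = 0) :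
    (1 / (Real.sqrt (a ^ 2 + 1) : ℂ)) *
        (-((a : ℂ) * (xk : ℂ) + Complex.I) *
            (Polynomial.Chebyshev.T ℂ ((n : ℤ) - 1)).eval (xk : ℂ) +
          (Real.sqrt (a ^ 2 + 1) : ℂ) * (1 - (xk : ℂ) ^ 2) *
            (Polynomial.Chebyshev.U ℂ ((n : ℤ) - 2)).eval (xk : ℂ)) =
      (((a : ℂ) + Complex.I * (xk : ℂ)) / (a : ℂ)) *
        (Polynomial.Chebyshev.U ℂ ((n : ℤ) - 2)).eval (xk : ℂ) ∧
    ‖((1 / (Real.sqrt (a ^ 2 + 1) : ℂ)) *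
        (-((a : ℂ) * (xk : ℂ) + Complex.I) *
            (Polynomial.Chebyshev.T ℂ ((n : ℤ) - 1)).eval (xk : ℂ) +
          (Real.sqrt (a ^ 2 + 1) : ℂ) * (1 - (xk : ℂ) ^ 2) *
            (Polynomial.Chebyshev.U ℂ ((n : ℤ) - 2)).eval (xk : ℂ)))‖ = 1 ∧
    ((Polynomial.Chebyshev.U ℝ ((n : ℤ) - 2)).eval xk) ^ 2 = a ^ 2 / (a ^ 2 + xk ^ 2) :=
  stmt19_general a ha n xk hzero
end
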